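/- arXiv:1501.05602 — 7 statements merged into one kernel-verified Lean document; each statement's English description precedes it below -/
import Mathlib

section
/- Under the same hypotheses (q-deformed Bannai–Ito algebra relations), I₃² I₁ + (q + q^{−1}) I₃ I₁ I₃ + I₁ I₃² = I₁ + (q^{1/2} + q^{−1/2}) ι₂ I₃ + ι₁. -/
/-! Take the `q`-anticommutator of the relation `{I₃, I₁}_q = I₂ + ι₂` with `I₃`. Expanding the
left side gives `I₃² I₁ + (q + q⁻¹) I₃ I₁ I₃ + I₁ I₃²`, while the right side is
`{I₂, I₃}_q + (q^{1/2} + q^{-1/2}) ι₂ I₃ = I₁ + ι₁ + (q^{1/2} + q^{-1/2}) ι₂ I₃`. -/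

section QAnticommutator

variable {K A : Type*} [Field K] [Ring A] [Algebra K A]

/-- `{a, b}_q`, parametrized by `s = q^{1/2}`. -/
def qAnticomm (s : K) (a b : A) : A := s • (a * b) + s⁻¹ • (b * a)

lemma qAnticomm_qAnticomm_self {s : K} (hs : s ≠ 0) (a b : A) :
    qAnticomm s (qAnticomm s a b) a = a ^ 2 * b + (s ^ 2 + s⁻¹ ^ 2) • (a * b * a) + b * a ^ 2 := by
  simp only [qAnticomm, mul_add, add_mul, mul_smul_comm, smul_mul_assoc, smul_add, smul_smul,
    mul_inv_cancel₀ hs, inv_mul_cancel₀ hs, one_smul, add_smul, sq, mul_assoc]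
  abel

lemma qAnticomm_add_smul_one_left (s c : K) (a b : A) :
    qAnticomm s (a + c • 1) b = qAnticomm s a b + (c * (s + s⁻¹)) • b := by
  simp only [qAnticomm, add_mul, mul_add, smul_mul_assoc, mul_smul_comm, one_mul, mul_one,
    smul_add, smul_smul, add_smul, mul_comm c]
  abel

end QAnticommutator

theorem stmt_7_general (q : ℝ) (hq : 0 < q) {A : Type*} [Ring A] [Algebra ℂ A]
    (I₁ I₂ I₃ : A) (ι₁ ι₂ : ℂ)
    (h23 : ((Real.sqrt q : ℝ) : ℂ) • (I₂ * I₃) + (((Real.sqrt q : ℝ) : ℂ))⁻¹ • (I₃ * I₂)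
      = I₁ + ι₁ • (1 : A))
    (h31 : ((Real.sqrt q : ℝ) : ℂ) • (I₃ * I₁) + (((Real.sqrt q : ℝ) : ℂ))⁻¹ • (I₁ * I₃)
      = I₂ + ι₂ • (1 : A)) :
    I₃ ^ 2 * I₁ + ((q + q⁻¹ : ℝ) : ℂ) • (I₃ * I₁ * I₃) + I₁ * I₃ ^ 2
      = I₁ + (((Real.sqrt q + (Real.sqrt q)⁻¹ : ℝ) : ℂ) * ι₂) • I₃ + ι₁ • (1 : A) := by
  set s : ℂ := ((Real.sqrt q : ℝ) : ℂ) with hs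
  have hs0 : s ≠ 0 := by simpa [hs] using (Real.sqrt_pos.2 hq).ne'
  have hcoeff : ((q + q⁻¹ : ℝ) : ℂ) = s ^ 2 + s⁻¹ ^ 2 := by
    rw [hs, ← Complex.ofReal_pow, ← Complex.ofReal_inv, ← Complex.ofReal_pow, inv_pow,
      Real.sq_sqrt hq.le]
    push_cast; rfl
  calc I₃ ^ 2 * I₁ + ((q + q⁻¹ : ℝ) : ℂ) • (I₃ * I₁ * I₃) + I₁ * I₃ ^ 2
      = qAnticomm s (qAnticomm s I₃ I₁) I₃ := by rw [qAnticomm_qAnticomm_self hs0, hcoeff]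
    _ = qAnticomm s I₂ I₃ + (ι₂ * (s + s⁻¹)) • I₃ := by
        rw [show qAnticomm s I₃ I₁ = I₂ + ι₂ • 1 from h31, qAnticomm_add_smul_one_left]
    _ = _ := by rw [qAnticomm, h23, add_right_comm, hs, mul_comm]; push_cast; rfl

theorem stmt_7 (q : ℝ) (hq : 0 < q) {A : Type*} [Ring A] [Algebra ℂ A]
    (I₁ I₂ I₃ : A) (ι₁ ι₂ ι₃ : ℂ)
    (h12 : ((Real.sqrt q : ℝ) : ℂ) • (I₁ * I₂) + (((Real.sqrt q : ℝ) : ℂ))⁻¹ • (I₂ * I₁)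
      = I₃ + ι₃ • (1 : A))
    (h23 : ((Real.sqrt q : ℝ) : ℂ) • (I₂ * I₃) + (((Real.sqrt q : ℝ) : ℂ))⁻¹ • (I₃ * I₂)
      = I₁ + ι₁ • (1 : A))
    (h31 : ((Real.sqrt q : ℝ) : ℂ) • (I₃ * I₁) + (((Real.sqrt q : ℝ) : ℂ))⁻¹ • (I₁ * I₃)
      = I₂ + ι₂ • (1 : A)) :
    I₃ ^ 2 * I₁ + ((q + q⁻¹ : ℝ) : ℂ) • (I₃ * I₁ * I₃) + I₁ * I₃ ^ 2
      = I₁ + (((Real.sqrt q + (Real.sqrt q)⁻¹ : ℝ) : ℂ) * ι₂) • I₃ + ι₁ • (1 : A) :=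
  stmt_7_general q hq I₁ I₂ I₃ ι₁ ι₂ h23 h31
end

section
/- Suppose linear operators I₁, I₃ on a finite-dimensional complex vector space satisfy the relation I₃² I₁ + (q+q^{−1}) I₃ I₁ I₃ + I₁ I₃² = I₁ + (q^{1/2}+q^{−1/2}) ι₂ I₃ + ι₁, and v, w are eigenvectors of I₃ with eigenvalues λ, λ'. If λ'² + (q+q^{−1})λ'λ + λ² − 1 ≠ 0 and λ ≠ λ', then the component of I₁ v along w (in an eigenbasis of I₃ with distinct eigenvalues) vanishes; equivalently, for a diagonalizable I₃ with simple spectrum {λ_n}, the matrix element (I₁)_{kn} in the eigenbasis of I₃ vanishes whenever λ_k² + (q+q^{−1})λ_kλ_n + λ_n² ≠ 1. -/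
open Matrix

section DiagonalSandwich

variable {ι R : Type*} [DecidableEq ι] [CommRing R]

theorem diagonal_sq_mul_add_smul_mul_mul_add_mul_diagonal_sq_apply [Fintype ι] (d : ι → R)
    (c : R) (A : Matrix ι ι R) (i j : ι) :
    (diagonal d ^ 2 * A + c • (diagonal d * A * diagonal d) + A * diagonal d ^ 2) i j
      = (d i ^ 2 + c * d i * d j + d j ^ 2) * A i j := by
  simp only [sq, diagonal_mul_diagonal, Matrix.add_apply, Matrix.smul_apply, diagonal_mul,
    mul_diagonal, smul_eq_mul]
  ring

theorem add_smul_diagonal_add_smul_one_apply_of_ne (d : ι → R) (a b : R) (A : Matrix ι ι R)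
    {i j : ι} (hij : i ≠ j) :
    (A + a • diagonal d + b • (1 : Matrix ι ι R)) i j = A i j := by
  simp [diagonal_apply_ne _ hij, one_apply_ne hij]

theorem apply_eq_zero_of_diagonal_relation [Fintype ι] [NoZeroDivisors R] {d : ι → R}
    {c a b : R} {A : Matrix ι ι R}
    (hrel : diagonal d ^ 2 * A + c • (diagonal d * A * diagonal d) + A * diagonal d ^ 2
      = A + a • diagonal d + b • (1 : Matrix ι ι R))
    {i j : ι} (hij : i ≠ j) (hne : d i ^ 2 + c * d i * d j + d j ^ 2 ≠ 1) :
    A i j = 0 := by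
  have hentry := congrFun (congrFun hrel i) j
  rw [diagonal_sq_mul_add_smul_mul_mul_add_mul_diagonal_sq_apply,
    add_smul_diagonal_add_smul_one_apply_of_ne _ _ _ _ hij] at hentry
  have hfactor : (d i ^ 2 + c * d i * d j + d j ^ 2 - 1) * A i j = 0 := by
    linear_combination hentry
  exact (mul_eq_zero.mp hfactor).resolve_left (sub_ne_zero.mpr hne)

end DiagonalSandwich

theorem stmt_9_general (q : ℝ) (ι₁ ι₂ : ℂ) (N : ℕ)
    (lam : Fin N → ℂ)
    (I₁ : Matrix (Fin N) (Fin N) ℂ)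
    (I₃ : Matrix (Fin N) (Fin N) ℂ) (hI₃ : I₃ = Matrix.diagonal lam)
    (hrel : I₃ ^ 2 * I₁ + ((q + q⁻¹ : ℝ) : ℂ) • (I₃ * I₁ * I₃) + I₁ * I₃ ^ 2
      = I₁ + (((Real.sqrt q + (Real.sqrt q)⁻¹ : ℝ) : ℂ) * ι₂) • I₃ + ι₁ • (1 : Matrix (Fin N) (Fin N) ℂ)) :
    ∀ k n : Fin N, k ≠ n →
      lam k ^ 2 + ((q + q⁻¹ : ℝ) : ℂ) * lam k * lam n + lam n ^ 2 ≠ 1 →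
      I₁ k n = 0 := by
  subst hI₃
  exact fun k n hkn hne => apply_eq_zero_of_diagonal_relation hrel hkn hne

theorem stmt_9 (q : ℝ) (hq : 0 < q) (ι₁ ι₂ : ℂ) (N : ℕ)
    (lam : Fin N → ℂ) (hlam : Function.Injective lam)
    (I₁ : Matrix (Fin N) (Fin N) ℂ)
    (I₃ : Matrix (Fin N) (Fin N) ℂ) (hI₃ : I₃ = Matrix.diagonal lam)
    (hrel : I₃ ^ 2 * I₁ + ((q + q⁻¹ : ℝ) : ℂ) • (I₃ * I₁ * I₃) + I₁ * I₃ ^ 2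
      = I₁ + (((Real.sqrt q + (Real.sqrt q)⁻¹ : ℝ) : ℂ) * ι₂) • I₃ + ι₁ • (1 : Matrix (Fin N) (Fin N) ℂ)) :
    ∀ k n : Fin N, k ≠ n →
      lam k ^ 2 + ((q + q⁻¹ : ℝ) : ℂ) * lam k * lam n + lam n ^ 2 ≠ 1 →
      I₁ k n = 0 :=
  stmt_9_general q ι₁ ι₂ N lam I₁ I₃ hI₃ hrel
end

section
/- For λ_n = (−1)^n ε [n + μ + 1/2]_q with ε = ±1, μ > 0, and 0 < q < 1, the quantity λ_k² + (q+q^{−1}) λ_k λ_n + λ_n² − 1 vanishes only if k = n or k = n ± 1. -/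
/-- The q-number `[x]_q = (q^x - q^{-x})/(q - q^{-1})`. -/
noncomputable def qnum (q x : ℝ) : ℝ := (q ^ x - q ^ (-x)) / (q - q⁻¹)

/-! With `L = log q` one has `[x]_q = sinh (L x) / sinh L` and `q + q⁻¹ = 2 cosh L`, and the
identity `sinh² a - 2 cosh c sinh a sinh b + sinh² b - sinh² c`
`= (cosh (a - b) - cosh c) (cosh (a + b) + cosh c)` shows that
`[x]² ∓ (q + q⁻¹) [x] [y] + [y]² - 1` vanishes exactly when `|x ± y| = 1`.
Since `λ_n = ±[n + μ + 1/2]_q` with sign alternating in `n`, the equation becomes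
`|(k + μ + 1/2) ± (n + μ + 1/2)| = 1`; for `μ > 0` only `|k - n| = 1` is possible. -/

open Real

theorem sinh_sq_sub_two_mul_cosh_mul_sinh_mul_sinh_add_sinh_sq (a b c : ℝ) :
    sinh a ^ 2 - 2 * cosh c * sinh a * sinh b + sinh b ^ 2 - sinh c ^ 2 =
      (cosh (a - b) - cosh c) * (cosh (a + b) + cosh c) := by
  rw [cosh_sub, cosh_add]
  linear_combination -cosh b ^ 2 * cosh_sq a - (sinh a ^ 2 + 1) * cosh_sq b + cosh_sq c

theorem qnum_neg (q x : ℝ) : qnum q (-x) = -qnum q x := by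
  rw [qnum, qnum, neg_neg, ← neg_div]; ring

theorem qnum_eq_sinh_div {q : ℝ} (hq : 0 < q) (x : ℝ) :
    qnum q x = sinh (log q * x) / sinh (log q) := by
  obtain ⟨L, rfl⟩ : ∃ L, q = exp L := ⟨log q, (exp_log hq).symm⟩
  rw [qnum, log_exp, sinh_eq, sinh_eq, div_div_div_cancel_right₀ two_ne_zero, ← exp_mul,
    ← exp_mul, ← exp_neg, mul_neg]

theorem add_inv_eq_two_mul_cosh_log {q : ℝ} (hq : 0 < q) : q + q⁻¹ = 2 * cosh (log q) := by
  rw [cosh_eq, exp_neg, exp_log hq]; ring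

theorem sinh_log_ne_zero {q : ℝ} (hq : 0 < q) (hq1 : q ≠ 1) : sinh (log q) ≠ 0 := by
  rw [ne_eq, sinh_eq_zero, log_eq_zero]; grind

theorem qnum_sq_sub_mul_add_sq_sub_one {q : ℝ} (hq : 0 < q) (hq1 : q ≠ 1) (x y : ℝ) :
    qnum q x ^ 2 - (q + q⁻¹) * qnum q x * qnum q y + qnum q y ^ 2 - 1 =
      (cosh (log q * x - log q * y) - cosh (log q)) *
        (cosh (log q * x + log q * y) + cosh (log q)) / sinh (log q) ^ 2 := by
  rw [← sinh_sq_sub_two_mul_cosh_mul_sinh_mul_sinh_add_sinh_sq, qnum_eq_sinh_div hq,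
    qnum_eq_sinh_div hq, add_inv_eq_two_mul_cosh_log hq]
  field_simp [sinh_log_ne_zero hq hq1]

theorem qnum_sq_sub_mul_add_sq_eq_one_iff {q : ℝ} (hq : 0 < q) (hq1 : q ≠ 1) (x y : ℝ) :
    qnum q x ^ 2 - (q + q⁻¹) * qnum q x * qnum q y + qnum q y ^ 2 - 1 = 0 ↔ |x - y| = 1 := by
  have hL : |log q| ≠ 0 := abs_ne_zero.2 fun h ↦ sinh_log_ne_zero hq hq1 (by rw [h, sinh_zero])
  rw [qnum_sq_sub_mul_add_sq_sub_one hq hq1, div_eq_zero_iff,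
    or_iff_left (pow_ne_zero 2 (sinh_log_ne_zero hq hq1)),
    mul_eq_zero, or_iff_left (add_pos (cosh_pos _) (cosh_pos _)).ne', sub_eq_zero, ← mul_sub,
    le_antisymm_iff, cosh_le_cosh, cosh_le_cosh, ← le_antisymm_iff, abs_mul, mul_eq_left₀ hL]

theorem qnum_sq_add_mul_add_sq_eq_one_iff {q : ℝ} (hq : 0 < q) (hq1 : q ≠ 1) (x y : ℝ) :
    qnum q x ^ 2 + (q + q⁻¹) * qnum q x * qnum q y + qnum q y ^ 2 - 1 = 0 ↔ |x + y| = 1 := by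
  rw [← sub_neg_eq_add x, ← qnum_sq_sub_mul_add_sq_eq_one_iff hq hq1, qnum_neg, neg_sq, mul_neg,
    sub_neg_eq_add]

theorem qnum_mul_of_sign {c : ℝ} (hc : c = 1 ∨ c = -1) (q x : ℝ) :
    qnum q (c * x) = c * qnum q x := by
  rcases hc with rfl | rfl <;> simp [qnum_neg]

theorem eq_succ_or_succ_eq_of_abs_neg_one_pow_mul_add {k n : ℕ} {c : ℝ} (hc : 1 / 2 < c)
    (h : |(-1) ^ k * (k + c) + (-1) ^ n * (n + c)| = 1) : k = n + 1 ∨ n = k + 1 := by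
  have hk : (0 : ℝ) ≤ k := k.cast_nonneg
  have hn : (0 : ℝ) ≤ n := n.cast_nonneg
  suffices (k : ℝ) = n + 1 ∨ (n : ℝ) = k + 1 by exact_mod_cast this
  rcases Nat.even_or_odd k with hk' | hk' <;> rcases Nat.even_or_odd n with hn' | hn' <;>
    simp only [hk'.neg_one_pow, hn'.neg_one_pow, one_mul, neg_one_mul] at h <;>
    rcases (abs_eq zero_le_one).1 h with h | h
  all_goals first | (exfalso; linarith) | (left; linarith) | (right; linarith)

theorem stmt_10 (q μ ε : ℝ) (hq0 : 0 < q) (hq1 : q < 1) (hμ : 0 < μ)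
    (hε : ε = 1 ∨ ε = -1)
    (lam : ℕ → ℝ)
    (hlam : ∀ n : ℕ, lam n = (-1) ^ (n + 1) * ε * qnum q ((n : ℝ) + μ + 1 / 2)) :
    ∀ k n : ℕ,
      lam k ^ 2 + (q + q⁻¹) * lam k * lam n + lam n ^ 2 - 1 = 0 →
      k = n ∨ k = n + 1 ∨ n = k + 1 := by
  intro k n h
  have hsign (m : ℕ) : (-1) ^ (m + 1) * ε = 1 ∨ (-1) ^ (m + 1) * ε = -1 := by
    rcases neg_one_pow_eq_or ℝ (m + 1) with hm | hm <;> rcases hε with rfl | rfl <;> simp [hm]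
  have habs : |ε| = 1 := by rcases hε with rfl | rfl <;> norm_num
  have hpow (m : ℕ) (x : ℝ) : (-1) ^ (m + 1) * ε * x = -ε * ((-1) ^ m * x) := by ring
  simp only [hlam, ← qnum_mul_of_sign (hsign _)] at h
  rw [qnum_sq_add_mul_add_sq_eq_one_iff hq0 hq1.ne, hpow, hpow, ← mul_add, abs_mul, abs_neg,
    habs, one_mul, add_assoc, add_assoc] at h
  exact Or.inr (eq_succ_or_succ_eq_of_abs_neg_one_pow_mul_add (by linarith) h)
end

section
/- In the q → 1 limit of the q-deformed Bannai–Ito algebra, i.e., for elements Ĩ₁, Ĩ₂, Ĩ₃ of an associative algebra satisfying {Ĩ_i, Ĩ_j} = Ĩ_k + ω_k (ordinary anticommutator) for even permutations (i,j,k), the element C̃ = Ĩ₁² + Ĩ₂² + Ĩ₃² commutes with Ĩ₁, Ĩ₂ and Ĩ₃. -/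
/-! Squaring turns anticommutators into commutators: `y²x - xy² = y(xy + yx) - (xy + yx)y`.
So if `xy + yx = z + ω` and `zx + xz = y + ω'` with `ω, ω'` central, then `[y², x] = [y, z]` and
`[z², x] = [z, y]` cancel, while `x²` commutes with `x` anyway. The relations are cyclic in
`(I₁, I₂, I₃)`, so the same computation applies to each generator. -/

section

variable {R : Type*} [Ring R]

theorem sq_mul_sub_mul_sq_of_anticomm_eq {x y z c : R} (hc : Commute y c)
    (h : x * y + y * x = z + c) : y ^ 2 * x - x * y ^ 2 = y * z - z * y := by
  calc y ^ 2 * x - x * y ^ 2 = y * (x * y + y * x) - (x * y + y * x) * y := by noncomm_ring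
    _ = y * z - z * y := by rw [h, mul_add, add_mul, hc.eq]; abel

theorem commute_sq_add_sq_add_sq_of_anticomm_eq {x y z a b : R}
    (ha : Commute y a) (hb : Commute z b) (hxy : x * y + y * x = z + a)
    (hzx : z * x + x * z = y + b) :
    Commute (x ^ 2 + y ^ 2 + z ^ 2) x := by
  rw [add_comm] at hzx
  refine sub_eq_zero.mp ?_
  calc (x ^ 2 + y ^ 2 + z ^ 2) * x - x * (x ^ 2 + y ^ 2 + z ^ 2)
        = (y ^ 2 * x - x * y ^ 2) + (z ^ 2 * x - x * z ^ 2) := by noncomm_ring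
    _ = (y * z - z * y) + (z * y - y * z) := by
      rw [sq_mul_sub_mul_sq_of_anticomm_eq ha hxy, sq_mul_sub_mul_sq_of_anticomm_eq hb hzx]
    _ = 0 := by abel

end

theorem stmt_15 {A : Type*} [Ring A] [Algebra ℂ A]
    (I₁ I₂ I₃ : A) (ω₁ ω₂ ω₃ : ℂ)
    (h12 : I₁ * I₂ + I₂ * I₁ = I₃ + ω₃ • (1 : A))
    (h23 : I₂ * I₃ + I₃ * I₂ = I₁ + ω₁ • (1 : A))
    (h31 : I₃ * I₁ + I₁ * I₃ = I₂ + ω₂ • (1 : A)) :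
    (I₁ ^ 2 + I₂ ^ 2 + I₃ ^ 2) * I₁ = I₁ * (I₁ ^ 2 + I₂ ^ 2 + I₃ ^ 2) ∧
    (I₁ ^ 2 + I₂ ^ 2 + I₃ ^ 2) * I₂ = I₂ * (I₁ ^ 2 + I₂ ^ 2 + I₃ ^ 2) ∧
    (I₁ ^ 2 + I₂ ^ 2 + I₃ ^ 2) * I₃ = I₃ * (I₁ ^ 2 + I₂ ^ 2 + I₃ ^ 2) := by
  have central (x : A) (ω : ℂ) : Commute x (ω • (1 : A)) := (Commute.one_right x).smul_right ω
  refine ⟨?_, ?_, ?_⟩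
  · exact commute_sq_add_sq_add_sq_of_anticomm_eq (central _ _) (central _ _) h12 h31
  · rw [show I₁ ^ 2 + I₂ ^ 2 + I₃ ^ 2 = I₂ ^ 2 + I₃ ^ 2 + I₁ ^ 2 by abel]
    exact commute_sq_add_sq_add_sq_of_anticomm_eq (central _ _) (central _ _) h23 h12
  · rw [show I₁ ^ 2 + I₂ ^ 2 + I₃ ^ 2 = I₃ ^ 2 + I₁ ^ 2 + I₂ ^ 2 by abel]
    exact commute_sq_add_sq_add_sq_of_anticomm_eq (central _ _) (central _ _) h31 h23
end

section
/- In the Bargmann realization of osp(1|2), the Casimir operator Q̃ = (Ã₊Ã₋ − (Ã₀ − 1/2))P̃ commutes with Ã₀, Ã₊, Ã₋ and P̃ on the space of complex polynomials. -/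
/-!
The Casimir operator is the scalar `-εμ`. Indeed `z Ã₋ = z d/dz + μ (1 - R)`, where `R f (z) = f (-z)`,
so `Ã₊Ã₋ - (Ã₀ - 1/2) = -μ R`, and `R P̃ = ε` since `R` is an involution. A scalar commutes with
every linear operator.
-/

open Polynomial

/-- Bargmann realization: `Ã₀ f = z f' + (μ + 1/2) f`. -/
noncomputable def oA0 (μ : ℝ) (f : Polynomial ℂ) : Polynomial ℂ :=
  X * derivative f + C ((μ : ℂ) + 1 / 2) * f

/-- Bargmann realization: `Ã₊ f = z f`. -/
noncomputable def oAp (f : Polynomial ℂ) : Polynomial ℂ := X * f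

/-- Bargmann realization: `Ã₋ f = f' + (μ/z)(f(z) − f(−z))`. -/
noncomputable def oAm (μ : ℝ) (f : Polynomial ℂ) : Polynomial ℂ :=
  derivative f + C (μ : ℂ) * ((f - f.comp (-X)) /ₘ X)

/-- Bargmann realization: `P̃ f (z) = ε f(−z)`. -/
noncomputable def oP (ε : ℝ) (f : Polynomial ℂ) : Polynomial ℂ :=
  C (ε : ℂ) * f.comp (-X)

/-- Casimir operator `Q̃ = (Ã₊Ã₋ − (Ã₀ − 1/2))P̃`. -/
noncomputable def oQ (μ ε : ℝ) (f : Polynomial ℂ) : Polynomial ℂ :=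
  oAp (oAm μ (oP ε f)) - oA0 μ (oP ε f) + C (1 / 2 : ℂ) * oP ε f

theorem X_mul_divByMonic_X_of_eval_zero {R : Type*} [CommRing R] {p : R[X]} (hp : p.eval 0 = 0) :
    X * (p /ₘ X) = p := by
  simpa [modByMonic_X, hp] using modByMonic_add_div p X

theorem X_mul_oAm (μ : ℝ) (f : ℂ[X]) :
    X * oAm μ f = X * derivative f + C (μ : ℂ) * (f - f.comp (-X)) := by
  rw [oAm, mul_add, mul_left_comm, X_mul_divByMonic_X_of_eval_zero (by simp [eval_comp])]

theorem oQ_eq_C_mul (μ ε : ℝ) (f : ℂ[X]) : oQ μ ε f = C (-((ε : ℂ) * μ)) * f := by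
  simp only [oQ, oAp, X_mul_oAm, oA0, oP, mul_comp, C_comp, comp_neg_X_comp_neg_X, map_neg, map_mul,
    map_add]
  ring

theorem oA0_C_mul (μ : ℝ) (c : ℂ) (f : ℂ[X]) : oA0 μ (C c * f) = C c * oA0 μ f := by
  simp only [oA0, derivative_C_mul]
  ring

theorem oAp_C_mul (c : ℂ) (f : ℂ[X]) : oAp (C c * f) = C c * oAp f := by
  simp only [oAp]
  ring

theorem oAm_C_mul (μ : ℝ) (c : ℂ) (f : ℂ[X]) : oAm μ (C c * f) = C c * oAm μ f := by
  refine mul_left_cancel₀ X_ne_zero ?_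
  rw [mul_left_comm, X_mul_oAm, X_mul_oAm, mul_comp, C_comp, derivative_C_mul]
  ring

theorem oP_C_mul (ε : ℝ) (c : ℂ) (f : ℂ[X]) : oP ε (C c * f) = C c * oP ε f := by
  simp only [oP, mul_comp, C_comp]
  ring

theorem stmt_17_general (μ ε : ℝ) (f : Polynomial ℂ) :
    oQ μ ε (oA0 μ f) = oA0 μ (oQ μ ε f) ∧
    oQ μ ε (oAp f) = oAp (oQ μ ε f) ∧
    oQ μ ε (oAm μ f) = oAm μ (oQ μ ε f) ∧
    oQ μ ε (oP ε f) = oP ε (oQ μ ε f) := by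
  simp only [oQ_eq_C_mul, oA0_C_mul, oAp_C_mul, oAm_C_mul, oP_C_mul, and_self]

theorem stmt_17 (μ ε : ℝ) (hε : ε = 1 ∨ ε = -1) (f : Polynomial ℂ) :
    oQ μ ε (oA0 μ f) = oA0 μ (oQ μ ε f) ∧
    oQ μ ε (oAp f) = oAp (oQ μ ε f) ∧
    oQ μ ε (oAm μ f) = oAm μ (oQ μ ε f) ∧
    oQ μ ε (oP ε f) = oP ε (oQ μ ε f) :=
  stmt_17_general μ ε f
end

section
/- For the module actions Ã₀|n⟩ = (n+μ+1/2)|n⟩, P̃|n⟩ = ε(−1)^n|n⟩, Ã₊|n⟩ = √(σ̃_{n+1})|n+1⟩, Ã₋|n⟩ = √(σ̃_n)|n−1⟩ with σ̃_n = n + μ(1 − (−1)^n), the Casimir Q̃ = (Ã₊Ã₋ − (Ã₀ − 1/2))P̃ acts as the scalar −εμ on every basis vector |n⟩. -/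
/-! On `e n` the operator `Ã₊Ã₋` acts as `σ̃ n` (also for `n = 0`, since `σ̃ 0 = 0`), so `Q̃`
acts as `ε (-1)^n (σ̃ n - n - μ) = -ε μ ((-1)^n)^2 = -ε μ`. -/

theorem raise_lower_apply_eq_smul {V : Type*} [AddCommGroup V] [Module ℂ V] (e : ℕ → V)
    (σ : ℕ → ℝ) (hσ0 : σ 0 = 0) (hσ : ∀ n : ℕ, 0 ≤ σ (n + 1)) (Ap Am : V →ₗ[ℂ] V)
    (hAp : ∀ n : ℕ, Ap (e n) = ((Real.sqrt (σ (n + 1)) : ℝ) : ℂ) • e (n + 1))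
    (hAm0 : Am (e 0) = 0)
    (hAm : ∀ n : ℕ, Am (e (n + 1)) = ((Real.sqrt (σ (n + 1)) : ℝ) : ℂ) • e n) (n : ℕ) :
    Ap (Am (e n)) = (σ n : ℂ) • e n := by
  cases n with
  | zero => rw [hAm0, map_zero, hσ0, Complex.ofReal_zero, zero_smul]
  | succ n =>
    rw [hAm, map_smul, hAp, smul_smul, ← Complex.ofReal_mul, Real.mul_self_sqrt (hσ n)]

theorem natCast_add_mul_one_sub_neg_one_pow_nonneg {μ : ℝ} (hμ : 0 ≤ μ) (n : ℕ) :
    0 ≤ (n : ℝ) + μ * (1 - (-1) ^ n) := by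
  have : (-1 : ℝ) ^ n ≤ 1 := (le_abs_self _).trans (abs_neg_one_pow n).le
  nlinarith

theorem stmt_18_general (μ ε : ℝ) (hμ : 0 < μ)
    {V : Type*} [AddCommGroup V] [Module ℂ V]
    (e : ℕ → V)
    (σ : ℕ → ℝ) (hσ : ∀ n : ℕ, σ n = (n : ℝ) + μ * (1 - (-1) ^ n))
    (A0 Ap Am P : V →ₗ[ℂ] V)
    (hA0 : ∀ n : ℕ, A0 (e n) = (((n : ℝ) + μ + 1 / 2 : ℝ) : ℂ) • e n)
    (hP : ∀ n : ℕ, P (e n) = ((ε * (-1) ^ n : ℝ) : ℂ) • e n)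
    (hAp : ∀ n : ℕ, Ap (e n) = ((Real.sqrt (σ (n + 1)) : ℝ) : ℂ) • e (n + 1))
    (hAm0 : Am (e 0) = 0)
    (hAm : ∀ n : ℕ, Am (e (n + 1)) = ((Real.sqrt (σ (n + 1)) : ℝ) : ℂ) • e n) :
    ∀ n : ℕ,
      Ap (Am (P (e n))) - A0 (P (e n)) + (1 / 2 : ℂ) • P (e n)
        = ((-ε * μ : ℝ) : ℂ) • e n := by
  intro n
  have hσ0 : σ 0 = 0 := by simp [hσ]
  have hσnn (m : ℕ) : 0 ≤ σ (m + 1) :=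
    hσ (m + 1) ▸ natCast_add_mul_one_sub_neg_one_pow_nonneg hμ.le (m + 1)
  have hsign : (-1 : ℂ) ^ n * (-1) ^ n = 1 := by rw [← mul_pow]; norm_num
  simp only [hP, map_smul, raise_lower_apply_eq_smul e σ hσ0 hσnn Ap Am hAp hAm0 hAm, hA0, smul_smul]
  rw [← sub_smul, ← add_smul, hσ]
  congr 1
  push_cast
  linear_combination (-(ε : ℂ) * μ) * hsign

theorem stmt_18 (μ ε : ℝ) (hμ : 0 < μ) (hε : ε = 1 ∨ ε = -1)
    {V : Type*} [AddCommGroup V] [Module ℂ V]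
    (e : ℕ → V)
    (σ : ℕ → ℝ) (hσ : ∀ n : ℕ, σ n = (n : ℝ) + μ * (1 - (-1) ^ n))
    (A0 Ap Am P : V →ₗ[ℂ] V)
    (hA0 : ∀ n : ℕ, A0 (e n) = (((n : ℝ) + μ + 1 / 2 : ℝ) : ℂ) • e n)
    (hP : ∀ n : ℕ, P (e n) = ((ε * (-1) ^ n : ℝ) : ℂ) • e n)
    (hAp : ∀ n : ℕ, Ap (e n) = ((Real.sqrt (σ (n + 1)) : ℝ) : ℂ) • e (n + 1))
    (hAm0 : Am (e 0) = 0)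
    (hAm : ∀ n : ℕ, Am (e (n + 1)) = ((Real.sqrt (σ (n + 1)) : ℝ) : ℂ) • e n) :
    ∀ n : ℕ,
      Ap (Am (P (e n))) - A0 (P (e n)) + (1 / 2 : ℂ) • P (e n)
        = ((-ε * μ : ℝ) : ℂ) • e n :=
  stmt_18_general μ ε hμ e σ hσ A0 Ap Am P hA0 hP hAp hAm0 hAm
end

section
/- For the q-deformed module actions on basis {|n⟩}: A₀|n⟩ = (n+μ+1/2)|n⟩, P|n⟩ = ε(−1)^n|n⟩, A₊|n⟩ = √(σ_{n+1})|n+1⟩, A₋|n⟩ = √(σ_n)|n−1⟩ with σ_n = [n+μ]_q − (−1)^n[μ]_q, the Casimir Q = (A₊A₋ − (q^{−1/2}q^{A₀} − q^{1/2}q^{−A₀})/(q−q^{−1}))P acts on each |n⟩ as the scalar −ε[μ]_q. -/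
lemma qnum_mono (q : ℝ) (hq0 : 0 < q) (hq1 : q < 1) : Monotone (qnum q) := by
  intro x y hxy
  have hne : q - q⁻¹ < 0 := by
    have : 1 < q⁻¹ := (one_lt_inv₀ hq0).2 hq1
    linarith
  unfold qnum
  rw [div_le_div_right_of_neg hne]
  have h1 : q ^ y ≤ q ^ x := Real.rpow_le_rpow_of_exponent_ge hq0 hq1.le hxy
  have h2 : q ^ (-y) ≥ q ^ (-x) := Real.rpow_le_rpow_of_exponent_ge hq0 hq1.le (by linarith)
  linarith

lemma qnum_zero (q : ℝ) : qnum q 0 = 0 := by simp [qnum]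

lemma qnum_nonneg (q x : ℝ) (hq0 : 0 < q) (hq1 : q < 1) (hx : 0 ≤ x) : 0 ≤ qnum q x := by
  have := qnum_mono q hq0 hq1 hx
  rwa [qnum_zero] at this

theorem stmt_19 (q μ ε : ℝ) (hq0 : 0 < q) (hq1 : q < 1) (hμ : 0 < μ)
    (hε : ε = 1 ∨ ε = -1)
    {V : Type*} [AddCommGroup V] [Module ℂ V]
    (e : ℕ → V)
    (σ : ℕ → ℝ) (hσ : ∀ n : ℕ, σ n = qnum q ((n : ℝ) + μ) - (-1) ^ n * qnum q μ)
    (A0 Ap Am P K2 K2i : V →ₗ[ℂ] V)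
    (hA0 : ∀ n : ℕ, A0 (e n) = (((n : ℝ) + μ + 1 / 2 : ℝ) : ℂ) • e n)
    (hP : ∀ n : ℕ, P (e n) = ((ε * (-1) ^ n : ℝ) : ℂ) • e n)
    (hAp : ∀ n : ℕ, Ap (e n) = ((Real.sqrt (σ (n + 1)) : ℝ) : ℂ) • e (n + 1))
    (hAm0 : Am (e 0) = 0)
    (hAm : ∀ n : ℕ, Am (e (n + 1)) = ((Real.sqrt (σ (n + 1)) : ℝ) : ℂ) • e n)
    (hK2 : ∀ n : ℕ, K2 (e n) = ((q ^ ((n : ℝ) + μ + 1 / 2) : ℝ) : ℂ) • e n)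
    (hK2i : ∀ n : ℕ, K2i (e n) = ((q ^ (-((n : ℝ) + μ + 1 / 2)) : ℝ) : ℂ) • e n) :
    ∀ n : ℕ,
      Ap (Am (P (e n)))
        - (((q - q⁻¹)⁻¹ : ℝ) : ℂ) •
            (((q ^ (-(1 : ℝ) / 2) : ℝ) : ℂ) • K2 (P (e n))
              - ((q ^ ((1 : ℝ) / 2) : ℝ) : ℂ) • K2i (P (e n)))
        = ((-ε * qnum q μ : ℝ) : ℂ) • e n := by
  have hd : q - q⁻¹ ≠ 0 := by
    have : 1 < q⁻¹ := (one_lt_inv₀ hq0).2 hq1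
    intro h; linarith [sub_eq_zero.mp h]
  have hσnn : ∀ n, 0 ≤ σ n := by
    intro n
    rw [hσ]
    rcases Nat.even_or_odd n with h | h
    · rw [h.neg_one_pow]
      have := qnum_mono q hq0 hq1
        (by nlinarith [Nat.cast_nonneg (α := ℝ) n] : μ ≤ (n:ℝ) + μ)
      linarith
    · rw [h.neg_one_pow]
      have h1 := qnum_nonneg q ((n:ℝ)+μ) hq0 hq1 (by positivity)
      have h2 := qnum_nonneg q μ hq0 hq1 hμ.le
      linarith
  have hA : ∀ X : ℝ, (q - q⁻¹)⁻¹ * (q ^ X - q ^ (-X)) = qnum q X := by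
    intro X; rw [qnum, div_eq_inv_mul]
  have hr1 : ∀ X : ℝ, q ^ (-(1:ℝ)/2) * q ^ (X + 1/2) = q ^ X := by
    intro X; rw [← Real.rpow_add hq0]; congr 1; ring
  have hr2 : ∀ X : ℝ, q ^ ((1:ℝ)/2) * q ^ (-(X + 1/2)) = q ^ (-X) := by
    intro X; rw [← Real.rpow_add hq0]; congr 1; ring
  intro n
  cases n with
  | zero =>
    simp only [hP 0, map_smul, hAm0, smul_zero, map_zero, hK2 0, hK2i 0]
    match_scalars
    push_cast
    norm_cast
    simp only [Int.negSucc_eq, mul_one]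
    push_cast
    simp only [zero_add]
    linear_combination (-ε*(q-q⁻¹)⁻¹) * hr1 μ + (ε*(q-q⁻¹)⁻¹) * hr2 μ + (-ε) * hA μ
  | succ m =>
    simp only [hP (m+1), map_smul, hAm m, hAp m, hK2 (m+1), hK2i (m+1)]
    match_scalars
    push_cast
    norm_cast
    simp only [Int.negSucc_eq, mul_one]
    push_cast
    have hs : Real.sqrt (σ (m+1)) * Real.sqrt (σ (m+1)) = σ (m+1) :=
      Real.mul_self_sqrt (hσnn (m+1))
    have hσ' : σ (m+1) = qnum q ((m:ℝ) + 1 + μ) - (-1:ℝ) ^ (m+1) * qnum q μ := by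
      rw [hσ (m+1)]; push_cast; ring_nf
    have ht : (-1:ℝ) ^ (m+1) * (-1:ℝ) ^ (m+1) = 1 := by
      rw [← pow_add]; exact Even.neg_one_pow ⟨m+1, by ring⟩
    linear_combination (ε*(-1:ℝ)^(m+1))*hs + (ε*(-1:ℝ)^(m+1))*hσ'
      + (-(ε*(-1:ℝ)^(m+1)))*(hA ((m:ℝ)+1+μ))
      + (-(ε*(-1:ℝ)^(m+1)*(q-q⁻¹)⁻¹))*hr1 ((m:ℝ)+1+μ)
      + (ε*(-1:ℝ)^(m+1)*(q-q⁻¹)⁻¹)*hr2 ((m:ℝ)+1+μ)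
      + (-(ε*qnum q μ))*ht
end
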